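/- Let G be a finite group, n ≥ 1, and let a = ((g₁,…,gₙ),s) be an element of the wreath product Gₙ = G ≀ Sₙ of type {m_r(c)}. Then the order of the centralizer of a in Gₙ is |C_{Gₙ}(a)| = ∏_{r ≥ 1} ∏_{[c]} m_r(c)! · (r·|C_G(c)|)^{m_r(c)}, where the product is over all r ≥ 1 and all conjugacy classes [c] of elements of G, and C_G(c) denotes the centralizer of c in G. -/

import Mathlib

open scoped BigOperators

/-- The action of permutations of `Fin n` on `Fin n → G` by `(s • g) i = g (s⁻¹ i)`,
as a homomorphism to the automorphism group. -/
def permAut (G : Type*) [Group G] (n : ℕ) : Equiv.Perm (Fin n) →* MulAut (Fin n → G) where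
  toFun s :=
    { toFun := fun g => g ∘ s.symm
      invFun := fun g => g ∘ s
      left_inv := fun g => by funext i; simp
      right_inv := fun g => by funext i; simp
      map_mul' := fun g h => rfl }
  map_one' := by ext g i; simp <;> rfl
  map_mul' s t := by ext g i; simp [Equiv.Perm.mul_def]

/-- The wreath product `G ≀ Sₙ`, the semidirect product of `Gⁿ` by the symmetric
group `Sₙ` permuting the factors. -/
abbrev WreathProduct (G : Type*) [Group G] (n : ℕ) :=
  (Fin n → G) ⋊[permAut G n] Equiv.Perm (Fin n)

/-- The action of the wreath product `G ≀ Sₙ` on `Xⁿ`: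
`((g₁,…,gₙ),s)·(x₁,…,xₙ) = (g₁ x_{s⁻¹(1)},…,gₙ x_{s⁻¹(n)})`. -/
instance wreathMulAction (G : Type*) [Group G] (X : Type*) [MulAction G X] (n : ℕ) :
    MulAction (WreathProduct G n) (Fin n → X) where
  smul a x := fun i => a.left i • x (a.right.symm i)
  one_smul x := by
    funext i
    show (1 : WreathProduct G n).left i • x ((1 : WreathProduct G n).right.symm i) = x i
    simp <;> rfl
  mul_smul a b x := by
    funext i
    show (a * b).left i • x ((a * b).right.symm i)
      = a.left i • (fun j => b.left j • x (b.right.symm j)) (a.right.symm i)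
    simp [SemidirectProduct.mul_left, SemidirectProduct.mul_right, permAut, mul_smul,
      Equiv.Perm.mul_def]

theorem wreath_smul_apply (G : Type*) [Group G] (X : Type*) [MulAction G X] (n : ℕ)
    (a : WreathProduct G n) (x : Fin n → X) (i : Fin n) :
    (a • x) i = a.left i • x (a.right.symm i) := rfl

open scoped Classical in
/-- The orbifold Euler characteristic of order `k` of a `G`-space `X`:
`χ⁽ᵏ⁾(X,G) = (1/|G|) Σ_{pairwise commuting (g₀,…,g_k)} |X^⟨g₀,…,g_k⟩|`. -/
noncomputable def orbChi (k : ℕ) (G : Type*) [Group G] (X : Type*) [MulAction G X] : ℚ :=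
  (∑ᶠ g : Fin (k + 1) → G,
      if ∀ i j, Commute (g i) (g j) then
        (Nat.card {x : X // ∀ i, g i • x = x} : ℚ)
      else 0) / (Nat.card G : ℚ)

/-- Generalized binomial coefficient `α choose j` for rational `α`. -/
noncomputable def qchoose (α : ℚ) (j : ℕ) : ℚ :=
  (∏ i ∈ Finset.range j, (α - i)) / (j.factorial : ℚ)

/-- The binomial series `(1 - t^m)^α ∈ ℚ⟦t⟧` for a rational exponent `α`:
its coefficient at `t^(m·j)` is `(-1)^j (α choose j)`. -/
noncomputable def onePowRat (m : ℕ) (α : ℚ) : PowerSeries ℚ :=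
  PowerSeries.mk fun n => if m ∣ n then (-1 : ℚ) ^ (n / m) * qchoose α (n / m) else 0

/-- The cycle product of the element `(g,s) ∈ G ≀ Sₙ` corresponding to the cycle
`(i, s(i), …, s^{r-1}(i))` of `s` through `i` (of length `r`, the minimal period of `i`),
computed with starting point `i`: `g_{s^{r-1}(i)} ⋯ g_{s(i)} g_i`. -/
noncomputable def cycleProd {G : Type*} [Group G] {n : ℕ} (g : Fin n → G)
    (s : Equiv.Perm (Fin n)) (i : Fin n) : G :=
  (((List.range (Function.minimalPeriod (⇑s) i)).map fun j => g ((s ^ j) i)).reverse).prod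

/-- `m_r(c)`, the number of `r`-cycles of `s` (fixed points counted as `1`-cycles) whose
cycle product lies in the conjugacy class of `c`: each such cycle consists of exactly `r`
points `i` with minimal period `r` and cycle product (computed from the starting point `i`)
conjugate to `c`. -/
noncomputable def mCount {G : Type*} [Group G] {n : ℕ} (g : Fin n → G)
    (s : Equiv.Perm (Fin n)) (r : ℕ) (c : G) : ℕ :=
  Nat.card {i : Fin n // Function.minimalPeriod (⇑s) i = r ∧ IsConj (cycleProd g s i) c} / r

/-!
An element `⟨h, t⁻¹⟩` of `G ≀ Sₙ` commutes with `a = ⟨g, s⟩` iff `t` commutes with `s` and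
`h (s i) * g (s (t i)) = g (s i) * h i` for all `i`. A permutation `t` commuting with `s` is the
same as a length-preserving permutation `σ` of the cycles of `s` together with, for each cycle,
the position on `σ c` to which its representative goes: `r` choices for an `r`-cycle. Given `t`,
the recurrence determines `h` from its values at the representatives, and the value `v` at the
representative of `c` must satisfy `x * v = v * y`, where `x` and `y` are conjugates of the cycle
products of `c` and of `t c`. This has `|C_G(x)|` solutions if `x` and `y` are conjugate and none
otherwise, so `σ` must also preserve the classes of the cycle products. Counting the `σ` that
preserve the type `(r, [c])` of every cycle gives `∏ m_r(c)!`, and the remaining choices give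
`∏ (r · |C_G(c)|) ^ m_r(c)`.
-/

open Function MulAction

namespace Equiv.Perm

variable {α : Type*} {s t : Perm α}

variable (s) in
theorem pow_apply_mod_period (i : α) (m : ℕ) : (s ^ (m % period s i)) i = (s ^ m) i :=
  pow_mod_period_smul m (m := s) (a := i)

variable (s) in
theorem pow_period_apply (i : α) : (s ^ period s i) i = i :=
  pow_period_smul s i

theorem apply_pow_apply_of_commute (h : Commute t s) (m : ℕ) (i : α) :
    t ((s ^ m) i) = (s ^ m) (t i) := by
  rw [← mul_apply, (h.pow_right m).eq, mul_apply]

theorem period_apply_of_commute (h : Commute t s) (i : α) : period s (t i) = period s i := by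
  have fixed_iff (m : ℕ) : (s ^ m) (t i) = t i ↔ (s ^ m) i = i := by
    rw [← apply_pow_apply_of_commute h, t.apply_eq_iff_eq]
  refine Nat.dvd_antisymm ?_ ?_
  · exact pow_smul_eq_iff_period_dvd.1 ((fixed_iff _).2 (pow_period_smul s i))
  · exact pow_smul_eq_iff_period_dvd.1 ((fixed_iff _).1 (pow_period_smul s (t i)))

theorem period_pow_apply (m : ℕ) (i : α) : period s ((s ^ m) i) = period s i :=
  period_apply_of_commute (Commute.self_pow s m).symm i

theorem sameCycle_apply_iff_of_commute (h : Commute t s) {i j : α} :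
    SameCycle s (t i) (t j) ↔ SameCycle s i j := by
  have hconj : t⁻¹ * s * t⁻¹⁻¹ = s := by rw [inv_inv, h.inv_left.eq, inv_mul_cancel_right]
  have := sameCycle_conj (g := t⁻¹) (f := s) (x := i) (y := j)
  rw [hconj, inv_inv] at this
  exact this.symm

variable (s) in
abbrev Cycles := Quotient (SameCycle.setoid s)

variable (s) in
abbrev toCycles (i : α) : Cycles s := Quotient.mk _ i

theorem toCycles_out (c : Cycles s) : toCycles s c.out = c := Quotient.out_eq c

theorem sameCycle_out (i : α) : SameCycle s (toCycles s i).out i :=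
  Quotient.mk_out (s := SameCycle.setoid s) i

theorem toCycles_pow_apply (m : ℕ) (i : α) : toCycles s ((s ^ m) i) = toCycles s i :=
  Quotient.sound (sameCycle_pow_left.2 (SameCycle.refl s i))

def cyclePerm (h : Commute t s) : Perm (Cycles s) :=
  Quotient.congr t fun _ _ => (sameCycle_apply_iff_of_commute h).symm

theorem cyclePerm_apply (h : Commute t s) (c : Cycles s) :
    cyclePerm h c = toCycles s (t c.out) := by
  conv_lhs => rw [← toCycles_out c]
  rfl

variable (s) in
/-- When `f` is the conjugacy class of the cycle product, this is the type `(r, [c])` of the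
cycle in the sense of `mCount`. -/
noncomputable def cycleLabel {β : Type*} (f : α → β) (c : Cycles s) : ℕ × β :=
  (period s c.out, f c.out)

theorem cycleLabel_comp_eq_iff {β : Type*} {f : α → β} {σ : Perm (Cycles s)} :
    cycleLabel s f ∘ σ = cycleLabel s f ↔
      ∀ c, period s (σ c).out = period s c.out ∧ f (σ c).out = f c.out := by
  simp only [funext_iff, comp_apply, cycleLabel, Prod.ext_iff]

variable [Finite α]

noncomputable instance : Fintype (Cycles s) := Fintype.ofFinite _

variable (s) in
theorem period_pos (i : α) : 0 < period s i :=
  period_pos_of_orderOf_pos (orderOf_pos s) i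

variable (s) in
theorem pow_apply_eq_pow_apply_iff {i : α} {a b : ℕ} :
    (s ^ a) i = (s ^ b) i ↔ a % period s i = b % period s i := by
  refine ⟨fun h => ?_, fun h => by rw [← pow_apply_mod_period, h, pow_apply_mod_period]⟩
  rw [← pow_apply_mod_period s i a, ← pow_apply_mod_period s i b, ← iterate_eq_pow,
    ← iterate_eq_pow] at h
  exact iterate_injOn_Iio_minimalPeriod (Nat.mod_lt _ (period_pos s i))
    (Nat.mod_lt _ (period_pos s i)) h

section Invariant

variable {β : Type*} {f : α → β} (hf : ∀ i, f (s i) = f i)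
include hf

theorem SameCycle.apply_eq {i j : α} (h : SameCycle s i j) : f i = f j := by
  obtain ⟨m, rfl⟩ := h.exists_nat_pow_eq
  clear h
  induction m with
  | zero => rfl
  | succ m ih => rw [pow_succ', mul_apply, hf]; exact ih

theorem apply_out_eq (i : α) : f (toCycles s i).out = f i :=
  (sameCycle_out i).apply_eq hf

theorem apply_pow_apply_eq (m : ℕ) (i : α) : f ((s ^ m) i) = f i :=
  (sameCycle_pow_left.2 (SameCycle.refl s i)).apply_eq hf

end Invariant

theorem period_out (i : α) : period s (toCycles s i).out = period s i :=
  (sameCycle_out i).apply_eq (period_apply_of_commute (Commute.refl s))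

theorem period_out_cyclePerm (h : Commute t s) (c : Cycles s) :
    period s (cyclePerm h c).out = period s c.out := by
  rw [cyclePerm_apply, period_out, period_apply_of_commute h]

variable (s) in
/-- The position of `i` on its cycle, counted from the representative `(toCycles s i).out`. -/
noncomputable def cycleIdx (i : α) : ℕ :=
  (sameCycle_out (s := s) i).exists_nat_pow_eq.choose % period s (toCycles s i).out

variable (s) in
theorem pow_cycleIdx_out (i : α) : (s ^ cycleIdx s i) (toCycles s i).out = i := by
  rw [cycleIdx, pow_apply_mod_period]
  exact (sameCycle_out i).exists_nat_pow_eq.choose_spec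

variable (s) in
theorem cycleIdx_lt (i : α) : cycleIdx s i < period s i := by
  rw [← period_out, cycleIdx]
  exact Nat.mod_lt _ (period_pos s _)

variable (s) in
theorem exists_pow_out_eq (i : α) : ∃ (c : Cycles s) (m : ℕ), (s ^ m) c.out = i :=
  ⟨_, _, pow_cycleIdx_out s i⟩

theorem cycleIdx_pow_out (c : Cycles s) (m : ℕ) :
    cycleIdx s ((s ^ m) c.out) = m % period s c.out := by
  have h := pow_cycleIdx_out s ((s ^ m) c.out)
  rw [toCycles_pow_apply, toCycles_out, pow_apply_eq_pow_apply_iff] at h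
  rw [← h, Nat.mod_eq_of_lt]
  simpa only [period_pow_apply] using cycleIdx_lt s ((s ^ m) c.out)

noncomputable def fiberToCyclesEquiv (c : Cycles s) :
    {i // toCycles s i = c} ≃ Fin (period s c.out) where
  toFun i := ⟨cycleIdx s i, by simpa only [← i.2, period_out] using cycleIdx_lt s i.1⟩
  invFun m := ⟨(s ^ (m : ℕ)) c.out, by rw [toCycles_pow_apply, toCycles_out]⟩
  left_inv := by rintro ⟨i, rfl⟩; exact Subtype.ext (pow_cycleIdx_out s i)
  right_inv m := Fin.ext (by simp only [cycleIdx_pow_out, Nat.mod_eq_of_lt m.2])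

theorem card_period_eq_and_eq_mul (r : ℕ) (P : Cycles s → Prop) :
    Nat.card {i // period s i = r ∧ P (toCycles s i)}
      = r * Nat.card {c : Cycles s // period s c.out = r ∧ P c} := by
  classical
  let e := Equiv.sigmaSubtypeFiberEquivSubtype (toCycles s)
    (p := fun i => period s i = r ∧ P (toCycles s i))
    (q := fun c => period s c.out = r ∧ P c) (fun i => by rw [period_out])
  rw [← Nat.card_congr e, Nat.card_sigma, Finset.sum_congr rfl fun c _ => by
    rw [Nat.card_congr (fiberToCyclesEquiv c.1), Nat.card_eq_fintype_card, Fintype.card_fin,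
      c.2.1], Finset.sum_const, Finset.card_univ, smul_eq_mul, Nat.card_eq_fintype_card, mul_comm]

section CycleData

variable {σ : Perm (Cycles s)} (hσ : ∀ c, period s (σ c).out = period s c.out)
  (k : Cycles s → ℕ)

variable (s σ) in
noncomputable def cycleDataFun (i : α) : α :=
  (s ^ (cycleIdx s i + k (toCycles s i))) (σ (toCycles s i)).out

include hσ

theorem cycleDataFun_pow_out (c : Cycles s) (m : ℕ) :
    cycleDataFun s σ k ((s ^ m) c.out) = (s ^ (m + k c)) (σ c).out := by
  rw [cycleDataFun, toCycles_pow_apply, toCycles_out, cycleIdx_pow_out,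
    pow_apply_eq_pow_apply_iff, hσ, Nat.mod_add_mod]

theorem cycleDataFun_out (c : Cycles s) : cycleDataFun s σ k c.out = (s ^ k c) (σ c).out := by
  simpa using cycleDataFun_pow_out hσ k c 0

theorem cycleDataFun_injective : Injective (cycleDataFun s σ k) := by
  intro i j hij
  obtain ⟨c, a, rfl⟩ := exists_pow_out_eq s i
  obtain ⟨d, b, rfl⟩ := exists_pow_out_eq s j
  rw [cycleDataFun_pow_out hσ, cycleDataFun_pow_out hσ] at hij
  obtain rfl : c = d := σ.injective <| by
    simpa only [toCycles_pow_apply, toCycles_out] using congrArg (toCycles s) hij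
  rw [pow_apply_eq_pow_apply_iff, hσ] at hij
  exact (pow_apply_eq_pow_apply_iff s).2 (Nat.ModEq.add_right_cancel' _ hij)

theorem cycleDataFun_apply (i : α) : cycleDataFun s σ k (s i) = s (cycleDataFun s σ k i) := by
  obtain ⟨c, m, rfl⟩ := exists_pow_out_eq s i
  rw [← mul_apply s (s ^ m), ← pow_succ', cycleDataFun_pow_out hσ, cycleDataFun_pow_out hσ,
    ← mul_apply, ← pow_succ', Nat.add_right_comm]

noncomputable def ofCycleData : Perm α :=
  Equiv.ofBijective _ (cycleDataFun_injective hσ k).bijective_of_finite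

theorem ofCycleData_apply (i : α) : ofCycleData hσ k i = cycleDataFun s σ k i := rfl

theorem commute_ofCycleData : Commute (ofCycleData hσ k) s :=
  Equiv.ext (cycleDataFun_apply hσ k)

end CycleData

noncomputable def commuteEquiv {β : Type*} {f : α → β} (hf : ∀ i, f (s i) = f i) :
    {t : Perm α // Commute t s ∧ ∀ c : Cycles s, f (t c.out) = f c.out} ≃
      {σ : Perm (Cycles s) // cycleLabel s f ∘ σ = cycleLabel s f}
        × ((c : Cycles s) → Fin (period s c.out)) where
  toFun t :=
    (⟨cyclePerm t.2.1, cycleLabel_comp_eq_iff.2 fun c => ⟨period_out_cyclePerm t.2.1 c, by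
        rw [cyclePerm_apply, apply_out_eq hf, t.2.2 c]⟩⟩,
      fun c => ⟨cycleIdx s (t.1 c.out), by
        simpa only [period_apply_of_commute t.2.1] using cycleIdx_lt s (t.1 c.out)⟩)
  invFun p :=
    have hσ c := (cycleLabel_comp_eq_iff.1 p.1.2 c).1
    ⟨ofCycleData hσ (fun c => p.2 c), commute_ofCycleData hσ _, fun c => by
      rw [ofCycleData_apply, cycleDataFun_out hσ, apply_pow_apply_eq hf]
      exact (cycleLabel_comp_eq_iff.1 p.1.2 c).2⟩
  left_inv t := by
    obtain ⟨t, ht, -⟩ := t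
    refine Subtype.ext (Equiv.ext fun i => ?_)
    obtain ⟨c, m, rfl⟩ := exists_pow_out_eq s i
    change cycleDataFun s (cyclePerm ht) (fun c => cycleIdx s (t c.out)) ((s ^ m) c.out) = _
    rw [cycleDataFun_pow_out (period_out_cyclePerm ht), pow_add, mul_apply, cyclePerm_apply,
      pow_cycleIdx_out, apply_pow_apply_of_commute ht]
  right_inv p := by
    obtain ⟨⟨σ, hσf⟩, k⟩ := p
    have hσ c := (cycleLabel_comp_eq_iff.1 hσf c).1
    refine Prod.ext (Subtype.ext (Equiv.ext fun c => ?_)) (funext fun c => Fin.ext ?_)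
    · change cyclePerm (commute_ofCycleData hσ _) c = σ c
      rw [cyclePerm_apply]
      change toCycles s (cycleDataFun s σ (fun c => k c) c.out) = σ c
      rw [cycleDataFun_out hσ, toCycles_pow_apply, toCycles_out]
    · change cycleIdx s (cycleDataFun s σ (fun c => k c) c.out) = k c
      rw [cycleDataFun_out hσ, cycleIdx_pow_out, hσ]
      exact Nat.mod_eq_of_lt (k c).2

theorem card_commute_and_eq {β : Type*} {f : α → β} (hf : ∀ i, f (s i) = f i) :
    Nat.card {t : Perm α // Commute t s ∧ ∀ c : Cycles s, f (t c.out) = f c.out}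
      = Nat.card {σ : Perm (Cycles s) // cycleLabel s f ∘ σ = cycleLabel s f}
        * ∏ c : Cycles s, period s c.out := by
  simp only [Nat.card_congr (commuteEquiv hf), Nat.card_prod, Nat.card_pi,
    Nat.card_eq_fintype_card, Fintype.card_fin]

end Equiv.Perm

theorem mulSupport_fiber_subset_range {ι κ : Type*} [Finite ι] (F : ι → κ) (φ : κ → ℕ) :
    mulSupport (fun p => (Nat.card {i // F i = p}).factorial * φ p ^ Nat.card {i // F i = p})
      ⊆ Set.range F := by
  intro p hp
  by_contra hnot
  have : IsEmpty {i // F i = p} := ⟨fun i => hnot ⟨i.1, i.2⟩⟩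
  exact hp (by simp only [Nat.card_of_isEmpty, Nat.factorial_zero, pow_zero, one_mul])

theorem card_perm_comp_eq_mul_prod_comp {ι κ : Type*} [Fintype ι] (F : ι → κ) (φ : κ → ℕ) :
    Nat.card {σ : Equiv.Perm ι // F ∘ σ = F} * ∏ i, φ (F i)
      = ∏ᶠ p, (Nat.card {i // F i = p}).factorial * φ p ^ Nat.card {i // F i = p} := by
  classical
  have fiber_card p : Nat.card {i // F i = p} = (Finset.univ.filter (F · = p)).card := by
    rw [Nat.card_eq_fintype_card, Fintype.card_subtype]
  rw [Nat.card_eq_fintype_card, DomMulAct.stabilizer_card', Finset.prod_comp φ F,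
    ← Finset.prod_mul_distrib, finprod_eq_prod_of_mulSupport_subset _ (s := Finset.univ.image F)]
  · exact Finset.prod_congr rfl fun p _ => by rw [fiber_card, Fintype.card_subtype]
  · simpa using mulSupport_fiber_subset_range F φ

section OrbitProd

open Equiv Perm

variable {α G : Type*} [Group G] (g : α → G) (s : Perm α) (i : α)

def orbitProd (m : ℕ) : G :=
  (((List.range m).map fun j => g ((s ^ j) i)).reverse).prod

@[simp]
theorem orbitProd_zero : orbitProd g s i 0 = 1 := rfl

theorem orbitProd_succ (m : ℕ) :
    orbitProd g s i (m + 1) = g ((s ^ m) i) * orbitProd g s i m := by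
  simp [orbitProd, List.range_succ]

theorem orbitProd_add (m k : ℕ) :
    orbitProd g s i (m + k) = orbitProd g s ((s ^ k) i) m * orbitProd g s i k := by
  induction m with
  | zero => simp
  | succ m ih =>
    rw [Nat.add_right_comm, orbitProd_succ, ih, orbitProd_succ, ← mul_apply, ← pow_add, mul_assoc]

theorem orbitProd_comp_of_commute {t : Perm α} (h : Commute t s) (m : ℕ) :
    orbitProd (fun j => g (t j)) s i m = orbitProd g s (t i) m := by
  simp only [orbitProd, apply_pow_apply_of_commute h]

theorem isConj_orbitProd_apply :
    IsConj (orbitProd g s i (period s i)) (orbitProd g s (s i) (period s i)) := by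
  have h := orbitProd_add g s i (period s i) 1
  rw [orbitProd_succ, pow_period_apply, pow_one, show orbitProd g s i 1 = g i by simp [orbitProd]]
    at h
  exact isConj_iff.2 ⟨g i, mul_inv_eq_of_eq_mul h⟩

end OrbitProd

section Recurrence

open Equiv Perm

variable {α G : Type*} [Group G] {s : Perm α} {A B : α → G} {h : α → G}
  (hh : ∀ i, h (s i) * B i = A i * h i)

include hh

theorem apply_pow_eq_orbitProd (i : α) (m : ℕ) :
    h ((s ^ m) i) = orbitProd A s i m * h i * (orbitProd B s i m)⁻¹ := by
  induction m with
  | zero => simp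
  | succ m ih =>
    rw [pow_succ', mul_apply, eq_mul_inv_of_mul_eq (hh _), ih, orbitProd_succ, orbitProd_succ]
    group

theorem orbitProd_period_mul_eq (i : α) :
    orbitProd A s i (period s i) * h i = h i * orbitProd B s i (period s i) := by
  have := apply_pow_eq_orbitProd hh i (period s i)
  rw [pow_period_apply, eq_mul_inv_iff_mul_eq] at this
  exact this.symm

omit hh

variable [Finite α]

variable (A B) in
noncomputable def extendAlongCycles (v : Cycles s → G) (i : α) : G :=
  orbitProd A s (toCycles s i).out (cycleIdx s i) * v (toCycles s i)
    * (orbitProd B s (toCycles s i).out (cycleIdx s i))⁻¹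

theorem extendAlongCycles_pow_out {v : Cycles s → G}
    (hv : ∀ c, orbitProd A s c.out (period s c.out) * v c
      = v c * orbitProd B s c.out (period s c.out)) (c : Cycles s) (m : ℕ) :
    extendAlongCycles A B v ((s ^ m) c.out)
      = orbitProd A s c.out m * v c * (orbitProd B s c.out m)⁻¹ := by
  have periodic : Function.Periodic
      (fun m => orbitProd A s c.out m * v c * (orbitProd B s c.out m)⁻¹) (period s c.out) :=
    fun m => by
      simp only [orbitProd_add, pow_period_apply, mul_inv_rev]
      rw [mul_assoc (orbitProd A s _ m), hv]
      group
  rw [extendAlongCycles, toCycles_pow_apply, toCycles_out, cycleIdx_pow_out]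
  exact periodic.map_mod_nat m

variable (A B) in
noncomputable def recurrenceEquiv :
    {h : α → G // ∀ i, h (s i) * B i = A i * h i} ≃
      ((c : Cycles s) → {v : G // orbitProd A s c.out (period s c.out) * v
        = v * orbitProd B s c.out (period s c.out)}) where
  toFun h c := ⟨h.1 c.out, orbitProd_period_mul_eq h.2 c.out⟩
  invFun v := ⟨extendAlongCycles A B (fun c => v c), fun i => by
    obtain ⟨c, m, rfl⟩ := exists_pow_out_eq s i
    have hv c := (v c).2
    rw [← mul_apply s (s ^ m), ← pow_succ', extendAlongCycles_pow_out hv,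
      extendAlongCycles_pow_out hv, orbitProd_succ, orbitProd_succ]
    group⟩
  left_inv h := Subtype.ext <| funext fun i => by
    obtain ⟨c, m, rfl⟩ := exists_pow_out_eq s i
    change extendAlongCycles A B (fun c => h.1 c.out) _ = _
    rw [extendAlongCycles_pow_out (orbitProd_period_mul_eq h.2 ·.out),
      apply_pow_eq_orbitProd h.2]
  right_inv v := funext fun c => Subtype.ext <| by
    simpa using extendAlongCycles_pow_out (fun c => (v c).2) c 0

end Recurrence

section ConjEquation

open Subgroup

variable {G : Type*} [Group G] {x y : G}

theorem isConj_of_mul_eq_mul {v : G} (h : x * v = v * y) : IsConj x y :=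
  isConj_iff.2 ⟨v⁻¹, by rw [inv_inv, mul_assoc, h, inv_mul_cancel_left]⟩

theorem card_mul_eq_mul_of_isConj (h : IsConj x y) :
    Nat.card {v : G // x * v = v * y} = Nat.card (centralizer {x}) := by
  obtain ⟨w, rfl⟩ := isConj_iff.1 h
  refine Nat.card_congr (Equiv.subtypeEquiv (Equiv.mulRight w) fun v => ?_)
  simp only [Equiv.coe_mulRight, mem_centralizer_singleton_iff]
  constructor <;> intro hv
  · rw [← mul_assoc x, hv]; group
  · calc x * v = x * (v * w) * w⁻¹ := by group
      _ = _ := by rw [← hv]; group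

theorem card_centralizer_eq_of_isConj (h : IsConj x y) :
    Nat.card (centralizer {x}) = Nat.card (centralizer {y}) := by
  rw [← card_mul_eq_mul_of_isConj h, ← card_mul_eq_mul_of_isConj h.symm]
  refine Nat.card_congr (Equiv.subtypeEquiv (Equiv.inv G) fun v => ?_)
  rw [Equiv.inv_apply, mul_inv_eq_iff_eq_mul, mul_assoc, eq_inv_mul_iff_mul_eq, eq_comm]

end ConjEquation

namespace WreathProduct

open Equiv Perm Subgroup

variable {G : Type*} [Group G] {n : ℕ} (g : Fin n → G) (s : Perm (Fin n))

theorem mem_centralizer_mk_iff {x : WreathProduct G n} :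
    x ∈ centralizer {⟨g, s⟩} ↔
      Commute x.right⁻¹ s ∧ ∀ i, x.left (s i) * g (s (x.right⁻¹ i)) = g (s i) * x.left i := by
  rw [mem_centralizer_singleton_iff, SemidirectProduct.ext_iff]
  change (x.left * (g ∘ x.right.symm) = g * (x.left ∘ s.symm) ∧ x.right * s = s * x.right) ↔ _
  rw [and_comm, ← commute_iff_eq, ← Commute.inv_left_iff, funext_iff, ← s.forall_congr_right]
  refine and_congr_right fun h => forall_congr' fun i => ?_
  rw [Pi.mul_apply, Pi.mul_apply, comp_apply, comp_apply, symm_apply_apply, ← Perm.inv_def,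
    ← mul_apply, h.eq, mul_apply]

noncomputable def cycleClass (i : Fin n) : Quot (IsConj (α := G)) := Quot.mk _ (cycleProd g s i)

theorem cycleProd_eq_orbitProd (i : Fin n) : cycleProd g s i = orbitProd g s i (period s i) :=
  rfl

theorem cycleClass_eq_iff {i : Fin n} {q : Quot (IsConj (α := G))} :
    cycleClass g s i = q ↔ IsConj (cycleProd g s i) q.out := by
  conv_lhs => rw [← Quot.out_eq q]
  exact ConjClasses.mk_eq_mk_iff_isConj

theorem cycleClass_eq_cycleClass_iff {i j : Fin n} :
    cycleClass g s i = cycleClass g s j ↔ IsConj (cycleProd g s i) (cycleProd g s j) :=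
  ConjClasses.mk_eq_mk_iff_isConj

theorem cycleClass_apply (i : Fin n) : cycleClass g s (s i) = cycleClass g s i := by
  rw [cycleClass_eq_cycleClass_iff, cycleProd_eq_orbitProd, cycleProd_eq_orbitProd,
    period_apply_of_commute (Commute.refl s)]
  exact (isConj_orbitProd_apply g s i).symm

theorem isConj_orbitProd_comp_cycleProd {t : Perm (Fin n)} (ht : Commute t s) (i : Fin n) :
    IsConj (orbitProd (fun j => g (s (t j))) s i (period s i)) (cycleProd g s (t i)) := by
  rw [orbitProd_comp_of_commute (fun j => g (s j)) s i ht,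
    orbitProd_comp_of_commute g s (t i) (Commute.refl s), ← period_apply_of_commute ht]
  exact (isConj_orbitProd_apply g s (t i)).symm

theorem isConj_orbitProd_cycleProd (i : Fin n) :
    IsConj (orbitProd (fun j => g (s j)) s i (period s i)) (cycleProd g s i) :=
  isConj_orbitProd_comp_cycleProd g s (Commute.one_left s) i

theorem cycleClass_apply_out_eq {t : Perm (Fin n)} (ht : Commute t s) {h : Fin n → G}
    (hh : ∀ i, h (s i) * g (s (t i)) = g (s i) * h i) (c : Cycles s) :
    cycleClass g s (t c.out) = cycleClass g s c.out := by
  have monodromy := isConj_of_mul_eq_mul (orbitProd_period_mul_eq hh c.out)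
  rw [cycleClass_eq_cycleClass_iff]
  exact (isConj_orbitProd_comp_cycleProd g s ht c.out).symm.trans
    (monodromy.symm.trans (isConj_orbitProd_cycleProd g s c.out))

/-- Indexed by the inverse `t` of the permutation part. Solvability of the recurrence for `h`
forces `t` to preserve the classes of the cycle products, so that condition costs nothing. -/
noncomputable def centralizerEquiv :
    centralizer {(⟨g, s⟩ : WreathProduct G n)} ≃
      Σ t : {t : Perm (Fin n) // Commute t s ∧
          ∀ c : Cycles s, cycleClass g s (t c.out) = cycleClass g s c.out},
        {h : Fin n → G // ∀ i, h (s i) * g (s (t.1 i)) = g (s i) * h i} where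
  toFun x :=
    have hx := (mem_centralizer_mk_iff g s).1 x.2
    ⟨⟨x.1.right⁻¹, hx.1, cycleClass_apply_out_eq g s hx.1 hx.2⟩, ⟨x.1.left, hx.2⟩⟩
  invFun p := ⟨⟨p.2.1, p.1.1⁻¹⟩, (mem_centralizer_mk_iff g s).2 <| by
    simpa only [inv_inv] using ⟨p.1.2.1, p.2.2⟩⟩
  left_inv _ := rfl
  right_inv _ := rfl

theorem card_centralizer_mk [Finite G] :
    Nat.card (centralizer {(⟨g, s⟩ : WreathProduct G n)})
      = Nat.card {t : Perm (Fin n) // Commute t s ∧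
          ∀ c : Cycles s, cycleClass g s (t c.out) = cycleClass g s c.out}
        * ∏ c : Cycles s, Nat.card (centralizer {cycleProd g s c.out}) := by
  classical
  rw [Nat.card_congr (centralizerEquiv g s), Nat.card_sigma,
    Finset.sum_congr rfl fun t _ => ?_, Finset.sum_const, Finset.card_univ, smul_eq_mul,
    Nat.card_eq_fintype_card]
  rw [Nat.card_congr (recurrenceEquiv _ _), Nat.card_pi]
  refine Finset.prod_congr rfl fun c _ => ?_
  have hc := (cycleClass_eq_cycleClass_iff g s).1 (t.2.2 c)
  rw [card_mul_eq_mul_of_isConj ((isConj_orbitProd_cycleProd g s c.out).trans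
      (hc.symm.trans (isConj_orbitProd_comp_cycleProd g s t.2.1 c.out).symm)),
    card_centralizer_eq_of_isConj (isConj_orbitProd_cycleProd g s c.out)]

theorem card_cycleLabel_eq_mCount {r : ℕ} (hr : 0 < r) (q : Quot (IsConj (α := G))) :
    Nat.card {c : Cycles s // cycleLabel s (cycleClass g s) c = (r, q)} = mCount g s r q.out := by
  have points : Nat.card {i // minimalPeriod s i = r ∧ IsConj (cycleProd g s i) q.out}
      = Nat.card {i // period s i = r ∧ cycleClass g s (toCycles s i).out = q} :=
    Nat.card_congr <| Equiv.subtypeEquivRight fun i => by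
      rw [apply_out_eq (cycleClass_apply g s), cycleClass_eq_iff]; rfl
  rw [mCount, points, card_period_eq_and_eq_mul r (fun c => cycleClass g s c.out = q),
    Nat.mul_div_cancel_left _ hr]
  exact Nat.card_congr (Equiv.subtypeEquivRight fun c => Prod.ext_iff)

theorem card_cycleLabel_zero (q : Quot (IsConj (α := G))) :
    Nat.card {c : Cycles s // cycleLabel s (cycleClass g s) c = (0, q)} = 0 := by
  rw [Nat.card_eq_zero]
  exact Or.inl ⟨fun c => (period_pos s c.1.out).ne' (congrArg Prod.fst c.2)⟩

end WreathProduct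

open Equiv.Perm WreathProduct

theorem wreath_centralizer_card_general
    (G : Type*) [Group G] [Fintype G] (n : ℕ) (a : WreathProduct G n) :
    Nat.card ↥(Subgroup.centralizer ({a} : Set (WreathProduct G n)))
      = ∏ᶠ (r : ℕ) (_ : 1 ≤ r), ∏ᶠ q : Quot (IsConj (α := G)),
          (mCount a.left a.right r q.out).factorial
            * (r * Nat.card ↥(Subgroup.centralizer ({q.out} : Set G)))
                ^ mCount a.left a.right r q.out := by
  obtain ⟨g, s⟩ := a
  have weight (c : Cycles s) :
      period s c.out * Nat.card (Subgroup.centralizer {cycleProd g s c.out})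
        = (cycleLabel s (cycleClass g s) c).1
          * Nat.card (Subgroup.centralizer {(cycleLabel s (cycleClass g s) c).2.out}) :=
    congrArg (period s c.out * ·) (card_centralizer_eq_of_isConj ((cycleClass_eq_iff g s).1 rfl))
  rw [card_centralizer_mk, card_commute_and_eq (cycleClass_apply g s), mul_assoc,
    ← Finset.prod_mul_distrib, Finset.prod_congr rfl fun c _ => weight c,
    card_perm_comp_eq_mul_prod_comp (cycleLabel s (cycleClass g s))
      (fun p => p.1 * Nat.card (Subgroup.centralizer {p.2.out})),
    finprod_curry _ ((Set.finite_range _).subset (mulSupport_fiber_subset_range _ _))]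
  refine finprod_congr fun r => ?_
  rcases Nat.eq_zero_or_pos r with rfl | hr
  · simp [card_cycleLabel_zero]
  · rw [finprod_eq_if, if_pos (show 1 ≤ r from hr)]
    exact finprod_congr fun q => by rw [card_cycleLabel_eq_mCount g s hr q]

/-- **Order of centralizers in wreath products.** For a finite group `G`, `n ≥ 1` and an
element `a = ((g₁,…,gₙ),s)` of `Gₙ = G ≀ Sₙ` of type `{m_r(c)}`,
`|C_{Gₙ}(a)| = ∏_{r ≥ 1} ∏_{[c]} m_r(c)! · (r·|C_G(c)|)^{m_r(c)}`, the product running over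
all `r ≥ 1` and all conjugacy classes of elements of `G` (formalized as the quotient of `G`
by the conjugation relation `IsConj`, with `Quot.out` picking a representative — the factor
does not depend on this choice). -/
theorem wreath_centralizer_card
    (G : Type*) [Group G] [Fintype G] (n : ℕ) (hn : 1 ≤ n) (a : WreathProduct G n) :
    Nat.card ↥(Subgroup.centralizer ({a} : Set (WreathProduct G n)))
      = ∏ᶠ (r : ℕ) (_ : 1 ≤ r), ∏ᶠ q : Quot (IsConj (α := G)),
          (mCount a.left a.right r q.out).factorial
            * (r * Nat.card ↥(Subgroup.centralizer ({q.out} : Set G)))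
                ^ mCount a.left a.right r q.out :=
  wreath_centralizer_card_general G n a
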